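/- Let T ∈ B(H) be concave (‖T²h‖² + ‖h‖² ≤ 2‖Th‖²) and set H∞ = ⋂_{n≥1} TⁿH. Then H∞ is a reducing subspace for T and the restriction of T to H∞ is a unitary operator on H∞. -/

import Mathlib

open ContinuousLinearMap

section Aux

variable {H : Type*} [NormedAddCommGroup H] [InnerProductSpace ℂ H]
  (T : H →L[ℂ] H)

private lemma pow_succ_apply' (n : ℕ) (h : H) : (T ^ (n + 1)) h = T ((T ^ n) h) := by
  rw [pow_succ']; rfl

private lemma d_antitone (hconc : ∀ h : H, ‖T (T h)‖ ^ 2 + ‖h‖ ^ 2 ≤ 2 * ‖T h‖ ^ 2) (h : H) :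
    Antitone (fun n => ‖(T ^ (n + 1)) h‖ ^ 2 - ‖(T ^ n) h‖ ^ 2) := by
  apply antitone_nat_of_succ_le
  intro n
  simp only [pow_succ_apply' T]
  have := hconc ((T ^ n) h)
  linarith

private lemma telescope (h : H) (n : ℕ) :
    ‖(T ^ n) h‖ ^ 2
      = ‖h‖ ^ 2 + ∑ k ∈ Finset.range n, (‖(T ^ (k + 1)) h‖ ^ 2 - ‖(T ^ k) h‖ ^ 2) := by
  have := Finset.sum_range_sub (fun k => ‖(T ^ k) h‖ ^ 2) n
  simp only [pow_zero, ContinuousLinearMap.one_apply] at this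
  linarith

private lemma expansive (hconc : ∀ h : H, ‖T (T h)‖ ^ 2 + ‖h‖ ^ 2 ≤ 2 * ‖T h‖ ^ 2)
    (h : H) : ‖h‖ ≤ ‖T h‖ := by
  rw [← pow_le_pow_iff_left₀ (norm_nonneg h) (norm_nonneg (T h)) two_ne_zero]
  by_contra hlt
  push_neg at hlt
  obtain ⟨n, hn⟩ := exists_nat_gt (‖h‖ ^ 2 / (‖h‖ ^ 2 - ‖T h‖ ^ 2))
  have hsum : ∑ k ∈ Finset.range n, (‖(T ^ (k + 1)) h‖ ^ 2 - ‖(T ^ k) h‖ ^ 2)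
      ≤ (n : ℝ) * (‖T h‖ ^ 2 - ‖h‖ ^ 2) := by
    calc ∑ k ∈ Finset.range n, (‖(T ^ (k + 1)) h‖ ^ 2 - ‖(T ^ k) h‖ ^ 2)
        ≤ ∑ _k ∈ Finset.range n, (‖T h‖ ^ 2 - ‖h‖ ^ 2) := by
          apply Finset.sum_le_sum
          intro k _
          have := d_antitone T hconc h (Nat.zero_le k)
          simpa [pow_one] using this
      _ = (n : ℝ) * (‖T h‖ ^ 2 - ‖h‖ ^ 2) := by
          rw [Finset.sum_const, Finset.card_range, nsmul_eq_mul]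
  have h1 : (0 : ℝ) ≤ ‖(T ^ n) h‖ ^ 2 := by positivity
  have h2 := telescope T h n
  have h3 : ‖h‖ ^ 2 < (n : ℝ) * (‖h‖ ^ 2 - ‖T h‖ ^ 2) := by
    rwa [div_lt_iff₀ (by linarith)] at hn
  nlinarith

private lemma key_bound (hconc : ∀ h : H, ‖T (T h)‖ ^ 2 + ‖h‖ ^ 2 ≤ 2 * ‖T h‖ ^ 2)
    (h : H) (n : ℕ) :
    (n : ℝ) * (‖T ((T ^ n) h)‖ ^ 2 - ‖(T ^ n) h‖ ^ 2) ≤ ‖(T ^ n) h‖ ^ 2 := by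
  have hdn : (n : ℝ) * (‖(T ^ (n + 1)) h‖ ^ 2 - ‖(T ^ n) h‖ ^ 2)
      ≤ ∑ k ∈ Finset.range n, (‖(T ^ (k + 1)) h‖ ^ 2 - ‖(T ^ k) h‖ ^ 2) := by
    calc (n : ℝ) * (‖(T ^ (n + 1)) h‖ ^ 2 - ‖(T ^ n) h‖ ^ 2)
        = ∑ _k ∈ Finset.range n, (‖(T ^ (n + 1)) h‖ ^ 2 - ‖(T ^ n) h‖ ^ 2) := by
          rw [Finset.sum_const, Finset.card_range, nsmul_eq_mul]
      _ ≤ ∑ k ∈ Finset.range n, (‖(T ^ (k + 1)) h‖ ^ 2 - ‖(T ^ k) h‖ ^ 2) := by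
          apply Finset.sum_le_sum
          intro k hk
          exact d_antitone T hconc h (le_of_lt (Finset.mem_range.mp hk))
  have h2 := telescope T h n
  have h3 : (0 : ℝ) ≤ ‖h‖ ^ 2 := by positivity
  rw [← pow_succ_apply' T n h]
  linarith

private lemma inner_map_map_eq [CompleteSpace H] (hexp : ∀ h : H, ‖h‖ ≤ ‖T h‖) (u : H)
    (hu : ‖T u‖ = ‖u‖) (v : H) :
    inner ℂ (T u) (T v) = inner ℂ u v := by
  set b : ℂ := inner ℂ (T u) (T v) - inner ℂ u v with hbdef
  rw [← sub_eq_zero, ← hbdef]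
  have hD0 : 0 ≤ ‖T v‖ ^ 2 - ‖v‖ ^ 2 := by
    have := hexp v
    nlinarith [norm_nonneg v, norm_nonneg (T v)]
  have key : ∀ c : ℂ, 0 ≤ 2 * (c * b).re + ‖c‖ ^ 2 * (‖T v‖ ^ 2 - ‖v‖ ^ 2) := by
    intro c
    have h1 : ‖u + c • v‖ ≤ ‖T (u + c • v)‖ := hexp _
    have h1' : ‖u + c • v‖ ^ 2 ≤ ‖T (u + c • v)‖ ^ 2 := by
      nlinarith [norm_nonneg (u + c • v), norm_nonneg (T (u + c • v))]
    have e1 : ‖T (u + c • v)‖ ^ 2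
        = ‖u‖ ^ 2 + 2 * (c * inner ℂ (T u) (T v)).re + ‖c‖ ^ 2 * ‖T v‖ ^ 2 := by
      rw [map_add, map_smul, norm_add_sq (𝕜 := ℂ), inner_smul_right, hu, norm_smul]
      simp only [RCLike.re_to_complex]
      ring
    have e2 : ‖u + c • v‖ ^ 2
        = ‖u‖ ^ 2 + 2 * (c * inner ℂ u v).re + ‖c‖ ^ 2 * ‖v‖ ^ 2 := by
      rw [norm_add_sq (𝕜 := ℂ), inner_smul_right, norm_smul]
      simp only [RCLike.re_to_complex]
      ring
    have e3 : (c * b).re = (c * inner ℂ (T u) (T v)).re - (c * inner ℂ u v).re := by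
      rw [hbdef, mul_sub, Complex.sub_re]
    rw [e3]
    rw [e1, e2] at h1'
    nlinarith
  set D : ℝ := ‖T v‖ ^ 2 - ‖v‖ ^ 2 with hDdef
  set t : ℝ := (D + 1)⁻¹ with htdef
  have ht0 : 0 < t := by positivity
  have ht1 : t * (D + 1) = 1 := inv_mul_cancel₀ (by linarith)
  have hkey := key (-(t : ℂ) * (starRingEnd ℂ) b)
  have hre : ((-(t : ℂ) * (starRingEnd ℂ) b) * b).re = -(t * ‖b‖ ^ 2) := by
    rw [mul_assoc, RCLike.conj_mul]
    simp [← Complex.ofReal_pow]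
  have hnc : ‖-(t : ℂ) * (starRingEnd ℂ) b‖ ^ 2 = t ^ 2 * ‖b‖ ^ 2 := by
    rw [norm_mul, norm_neg, Complex.norm_real, RCLike.norm_conj, mul_pow,
      Real.norm_eq_abs, sq_abs]
  rw [hre, hnc] at hkey
  have htB : 0 ≤ t * ‖b‖ ^ 2 := by positivity
  have htD1 : t * D ≤ 1 := by nlinarith
  have h5 : t ^ 2 * ‖b‖ ^ 2 * D ≤ t * ‖b‖ ^ 2 := by
    calc t ^ 2 * ‖b‖ ^ 2 * D = (t * ‖b‖ ^ 2) * (t * D) := by ring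
      _ ≤ (t * ‖b‖ ^ 2) * 1 := mul_le_mul_of_nonneg_left htD1 htB
      _ = t * ‖b‖ ^ 2 := mul_one _
  have h6 : t * ‖b‖ ^ 2 ≤ 0 := by linarith
  have hb2 : ‖b‖ ^ 2 ≤ 0 := by
    by_contra hB
    push_neg at hB
    nlinarith [mul_pos ht0 hB]
  have hb0 : ‖b‖ ^ 2 = 0 := le_antisymm hb2 (sq_nonneg _)
  have : ‖b‖ = 0 := by
    have := pow_eq_zero_iff (n := 2) (by norm_num) |>.mp hb0
    exact this
  exact norm_eq_zero.mp this

end Aux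

/-- Theorem 3.8 of the paper, scalar case: for a concave operator `T`, the subspace
`H∞ = ⋂ₙ TⁿH` reduces `T` and the restriction of `T` to `H∞` is unitary
(isometric and onto `H∞`). -/
theorem concave_core_reducing_unitary {H : Type*} [NormedAddCommGroup H]
    [InnerProductSpace ℂ H] [CompleteSpace H] (T : H →L[ℂ] H)
    (hconc : ∀ h : H, ‖T (T h)‖ ^ 2 + ‖h‖ ^ 2 ≤ 2 * ‖T h‖ ^ 2) :
    (let Hinf : Submodule ℂ H := ⨅ n : ℕ, LinearMap.range ((T ^ (n + 1) : H →L[ℂ] H) : H →ₗ[ℂ] H)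
     (∀ x ∈ Hinf, T x ∈ Hinf) ∧
     (∀ x ∈ Hinf, adjoint T x ∈ Hinf) ∧
     (∀ x ∈ Hinf, ‖T x‖ = ‖x‖) ∧
     (∀ y ∈ Hinf, ∃ x ∈ Hinf, T x = y)) := by
  intro Hinf
  have hexp : ∀ h : H, ‖h‖ ≤ ‖T h‖ := expansive T hconc
  have hinj : Function.Injective T := by
    intro a b hab
    have h1 : ‖a - b‖ ≤ ‖T (a - b)‖ := hexp _
    rw [map_sub, hab, sub_self, norm_zero] at h1
    have : ‖a - b‖ = 0 := le_antisymm h1 (norm_nonneg _)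
    rw [norm_eq_zero, sub_eq_zero] at this
    exact this
  have hmem : ∀ x : H, x ∈ Hinf ↔ ∀ n : ℕ, ∃ y : H, (T ^ (n + 1)) y = x := by
    intro x
    simp only [Hinf, Submodule.mem_iInf, LinearMap.mem_range, ContinuousLinearMap.coe_coe]
  -- invariance
  have hinv : ∀ x ∈ Hinf, T x ∈ Hinf := by
    intro x hx
    rw [hmem] at hx ⊢
    intro n
    obtain ⟨y, hy⟩ := hx n
    refine ⟨T y, ?_⟩
    have h2 : (T ^ (n + 1)) (T y) = T ((T ^ (n + 1)) y) := by
      rw [← ContinuousLinearMap.mul_apply, ← pow_succ, pow_succ_apply']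
    rw [h2, hy]
  -- isometry on Hinf
  have hiso : ∀ x ∈ Hinf, ‖T x‖ = ‖x‖ := by
    intro x hx
    rw [hmem] at hx
    have hle : ∀ n : ℕ, ((n : ℝ) + 1) * (‖T x‖ ^ 2 - ‖x‖ ^ 2) ≤ ‖x‖ ^ 2 := by
      intro n
      obtain ⟨y, hy⟩ := hx n
      have := key_bound T hconc y (n + 1)
      rw [hy] at this
      push_cast at this
      linarith
    have hle2 : ‖T x‖ ^ 2 ≤ ‖x‖ ^ 2 := by
      by_contra hgt
      push_neg at hgt
      obtain ⟨n, hn⟩ := exists_nat_gt (‖x‖ ^ 2 / (‖T x‖ ^ 2 - ‖x‖ ^ 2))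
      have h3 : ‖x‖ ^ 2 < (n : ℝ) * (‖T x‖ ^ 2 - ‖x‖ ^ 2) := by
        rwa [div_lt_iff₀ (by linarith)] at hn
      have := hle n
      nlinarith
    have hge : ‖x‖ ≤ ‖T x‖ := hexp x
    have : ‖T x‖ ≤ ‖x‖ :=
      (pow_le_pow_iff_left₀ (norm_nonneg _) (norm_nonneg _) two_ne_zero).mp hle2
    linarith
  -- surjectivity onto Hinf
  have hsurj : ∀ y ∈ Hinf, ∃ x ∈ Hinf, T x = y := by
    intro y hy
    rw [hmem] at hy
    obtain ⟨z1, hz1⟩ := hy 1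
    refine ⟨T z1, ?_, ?_⟩
    · rw [hmem]
      intro m
      obtain ⟨z, hz⟩ := hy (m + 1)
      refine ⟨z, hinj ?_⟩
      have h2 : (T ^ (1 + 1)) z1 = T (T z1) := by rw [pow_succ_apply', pow_one]
      rw [← pow_succ_apply' T (m + 1) z, hz, ← h2, hz1]
    · have h2 : (T ^ (1 + 1)) z1 = T (T z1) := by rw [pow_succ_apply', pow_one]
      rw [← h2, hz1]
  refine ⟨hinv, ?_, hiso, hsurj⟩
  -- adjoint invariance
  intro x hx
  obtain ⟨u, hu_mem, hTu⟩ := hsurj x hx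
  have huiso : ‖T u‖ = ‖u‖ := hiso u hu_mem
  have hadj : adjoint T x = u := by
    apply ext_inner_right ℂ
    intro v
    rw [adjoint_inner_left, ← hTu]
    exact inner_map_map_eq T hexp u huiso v
  rw [hadj]
  exact hu_mem
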